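/- arXiv:1607.05842 — 3 statements merged into one kernel-verified Lean document; each statement's English description precedes it below -/
import Mathlib

section
/- Let a>2, b<0 and ρ ∈ (−1,1) be real numbers and let Γ = R ⊗ Σ where Σ is the 2×2 matrix with Σ₁₁ = −b/(a−2), Σ₁₂ = Σ₂₁ = 1, Σ₂₂ = −a/b and R = [[1,ρ],[ρ,1]]. Then for every μ = (x,y,z,t) ∈ ℝ⁴, (1/2) μᵀΓ⁻¹μ = (1−ρ²)⁻¹ · ( I_M(x,y) + I_M(z,t) + ρ·((a−2)/2)·( yz + xt + (a/b)zx + (b/(a−2))ty ) ), where I_M(m,n) = −(a(a−2)/(4b)) m² − (b/4) n² − ((a−2)/2) mn. -/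
set_option maxHeartbeats 1000000


open Matrix Kronecker

/-- For `a > 2`, `b < 0`, `ρ ∈ (-1,1)` and `Γ = R ⊗ Σ` with
`Σ = !![-b/(a-2), 1; 1, -a/b]` and `R = !![1, ρ; ρ, 1]`, for every
`μ = (x,y,z,t) ∈ ℝ⁴` one has
`(1/2) μᵀΓ⁻¹μ
  = (1-ρ²)⁻¹ (I_M(x,y) + I_M(z,t) + ρ((a-2)/2)(yz + xt + (a/b)zx + (b/(a-2))ty))`
where `I_M(m,n) = -(a(a-2)/(4b)) m² - (b/4) n² - ((a-2)/2) mn`. -/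
theorem half_quadratic_inv_gamma (a b ρ : ℝ) (ha : 2 < a) (hb : b < 0)
    (hρ : ρ ∈ Set.Ioo (-1 : ℝ) 1)
    (S R : Matrix (Fin 2) (Fin 2) ℝ)
    (hS : S = !![-b/(a-2), 1; 1, -a/b])
    (hR : R = !![1, ρ; ρ, 1])
    (IM : ℝ → ℝ → ℝ)
    (hIM : ∀ m n, IM m n = -(a*(a-2)/(4*b)) * m^2 - (b/4) * n^2 - ((a-2)/2) * m * n)
    (x y z t : ℝ)
    (μ : Fin 2 × Fin 2 → ℝ) (hμ : μ = fun p => !![x, y; z, t] p.1 p.2) :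
    (1/2) * (μ ⬝ᵥ (R ⊗ₖ S)⁻¹.mulVec μ)
      = (1 - ρ^2)⁻¹ * (IM x y + IM z t
          + ρ * ((a-2)/2) * (y*z + x*t + (a/b)*(z*x) + (b/(a-2))*(t*y))) := by
  have ha2 : a - 2 ≠ 0 := by linarith
  have hb0 : b ≠ 0 := ne_of_lt hb
  have hρ2 : 1 - ρ^2 ≠ 0 := by
    obtain ⟨h1, h2⟩ := hρ
    nlinarith
  have hdetS : S.det = 2/(a-2) := by
    subst hS; simp [Matrix.det_fin_two_of]; field_simp; ring
  have hdetR : R.det = 1 - ρ^2 := by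
    subst hR; simp [Matrix.det_fin_two_of]; ring
  have hSinv : S⁻¹ = ((a-2)/2) • !![-a/b, -1; -1, -b/(a-2)] := by
    rw [Matrix.inv_def, hdetS, Matrix.adjugate_fin_two, hS]
    simp [Matrix.smul_of]
  have hRinv : R⁻¹ = (1-ρ^2)⁻¹ • !![1, -ρ; -ρ, 1] := by
    rw [Matrix.inv_def, hdetR, Matrix.adjugate_fin_two, hR]
    simp
  rw [Matrix.inv_kronecker, hSinv, hRinv, hμ, hIM, hIM]
  simp [Matrix.mulVec, dotProduct, Fin.sum_univ_succ, Matrix.kroneckerMap_apply,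
    Fintype.sum_prod_type]
  field_simp
  ring
end

section
/- Let a>2 and b<0 be real numbers, and for x>0, y>0 with xy>1 define I(x,y) = y/(2(xy−1)) + (b²/8)x + ((a−2)²/8)y + ab/4. Then I(x,y) ≥ 0 for all (x,y) in this domain, and I(x,y) = 0 if and only if (x,y) = (−a/b, −b/(a−2)). -/
/-!
With `u = x - 1/y`, which is positive on the domain, the rate function is a sum of two
nonnegative terms,
`I(x,y) = (2 + b u)² / (8u) + (b + (a-2) y)² / (8y)`,
so it vanishes exactly when `b u = -2` and `(a-2) y = -b`, a linear system whose only
solution is `(x, y) = (-a/b, -b/(a-2))`.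
-/

noncomputable def rateFn (a b x y : ℝ) : ℝ :=
  y / (2 * (x * y - 1)) + (b ^ 2 / 8) * x + ((a - 2) ^ 2 / 8) * y + a * b / 4

section

variable {a b x y : ℝ}

lemma sub_inv_pos_of_one_lt_mul (hy : 0 < y) (hxy : 1 < x * y) : 0 < x - y⁻¹ := by
  rw [sub_pos, inv_lt_iff_one_lt_mul₀ hy]
  exact hxy

lemma rateFn_eq_add_sq_div (hy : 0 < y) (hxy : 1 < x * y) :
    rateFn a b x y =
      (2 + b * (x - y⁻¹)) ^ 2 / (8 * (x - y⁻¹)) + (b + (a - 2) * y) ^ 2 / (8 * y) := by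
  have hu : x - y⁻¹ = (x * y - 1) / y := by field_simp
  rw [rateFn, hu]
  have : y * x - 1 ≠ 0 := by linarith [mul_comm x y]
  field_simp
  ring

lemma rateFn_nonneg (hy : 0 < y) (hxy : 1 < x * y) : 0 ≤ rateFn a b x y := by
  have hu := sub_inv_pos_of_one_lt_mul hy hxy
  rw [rateFn_eq_add_sq_div hy hxy]
  positivity

lemma rateFn_eq_zero_iff (hy : 0 < y) (hxy : 1 < x * y) :
    rateFn a b x y = 0 ↔ 2 + b * (x - y⁻¹) = 0 ∧ b + (a - 2) * y = 0 := by
  have hu := sub_inv_pos_of_one_lt_mul hy hxy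
  rw [rateFn_eq_add_sq_div hy hxy, add_eq_zero_iff_of_nonneg (by positivity) (by positivity),
    div_eq_zero_iff, div_eq_zero_iff, sq_eq_zero_iff, sq_eq_zero_iff]
  simp only [mul_eq_zero, OfNat.ofNat_ne_zero, hu.ne', hy.ne', or_false]

lemma zero_conditions_iff_eq_critical_point (hx : 0 < x) (hy : 0 < y) :
    2 + b * (x - y⁻¹) = 0 ∧ b + (a - 2) * y = 0 ↔ x = -a / b ∧ y = -b / (a - 2) := by
  constructor
  · rintro ⟨hbu, hby⟩
    have hb : b ≠ 0 := by rintro rfl; norm_num at hbu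
    have ha : a - 2 ≠ 0 := by rintro h; rw [h] at hby; exact hb (by simpa using hby)
    have hyv : y = -b / (a - 2) := by rw [eq_div_iff ha]; linarith
    refine ⟨?_, hyv⟩
    rw [hyv] at hbu
    field_simp at hbu ⊢
    linarith
  · rintro ⟨rfl, rfl⟩
    have hb : b ≠ 0 := by rintro rfl; simp at hx
    have ha : a - 2 ≠ 0 := by rintro h; simp [h] at hy
    constructor <;> field_simp <;> ring

end

theorem I_nonneg_vanishes_general (a b : ℝ)
    (I : ℝ → ℝ → ℝ)
    (hI : ∀ x y : ℝ, 0 < x → 0 < y → 1 < x * y →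
      I x y = y/(2*(x*y - 1)) + (b^2/8)*x + ((a-2)^2/8)*y + a*b/4) :
    ∀ x y : ℝ, 0 < x → 0 < y → 1 < x * y →
      0 ≤ I x y ∧ (I x y = 0 ↔ (x = -a/b ∧ y = -b/(a-2))) := by
  intro x y hx hy hxy
  have hIx : I x y = rateFn a b x y := hI x y hx hy hxy
  rw [hIx, rateFn_eq_zero_iff hy hxy, zero_conditions_iff_eq_critical_point hx hy]
  exact ⟨rateFn_nonneg hy hxy, Iff.rfl⟩

/-- For `a > 2` and `b < 0`, the rate function
`I(x,y) = y/(2(xy-1)) + (b²/8)x + ((a-2)²/8)y + ab/4`, defined for `x > 0`, `y > 0`,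
`xy > 1`, is nonnegative and vanishes exactly at `(x,y) = (-a/b, -b/(a-2))`. -/
theorem I_nonneg_vanishes (a b : ℝ) (ha : 2 < a) (hb : b < 0)
    (I : ℝ → ℝ → ℝ)
    (hI : ∀ x y : ℝ, 0 < x → 0 < y → 1 < x * y →
      I x y = y/(2*(x*y - 1)) + (b^2/8)*x + ((a-2)^2/8)*y + a*b/4) :
    ∀ x y : ℝ, 0 < x → 0 < y → 1 < x * y →
      0 ≤ I x y ∧ (I x y = 0 ↔ (x = -a/b ∧ y = -b/(a-2))) :=
  I_nonneg_vanishes_general a b I hI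
end

section
/- Let a>2 and b<0 be real numbers and define J(z,t) = z/2 + ( b²/(16z) + (a−2)²/(16t) )·(1+√(1+4tz)) + ab/4 for z>0, t>0. Set ε = b²/(4(4−ab)), A = (4−ab)/2, ξ = (a−2)²/(4(4−ab)) and B = 4(4−ab)⁵/b⁶, and let K = [ε,A] × [ξ,B]. Then for every (z,t) with z>0, t>0 and (z,t) ∉ K, one has J(z,t) ≥ 1. -/
/-!
Write `c = 4 - ab`, so that `ab/4 = 1 - c/4` and `J ≥ 1` as soon as one of the three nonnegative
terms `z/2`, `b²/(16z)·(1+√(1+4tz))`, `(a-2)²/(16t)·(1+√(1+4tz))` reaches `c/4`. Leaving `K`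
through `z > A` makes the first term large, through `z < ε` or `t < ξ` one of the two others
(since `1 + √(1+4tz) ≥ 1`). Leaving it through `t > B` with `z ≤ A`, the bound
`√(1+4tz) ≥ 2√(tz)` makes `b²/(16z)·√(1+4tz)` large, because `b² < c²`.
-/

noncomputable section

open Real

def cirRate (a b z t : ℝ) : ℝ :=
  z / 2 + (b ^ 2 / (16 * z) + (a - 2) ^ 2 / (16 * t)) * (1 + √(1 + 4 * t * z)) + a * b / 4

lemma one_le_cirRate_of_dominant {a b z t : ℝ} (hz : 0 < z) (ht : 0 < t)
    (h : (4 - a * b) / 4 ≤ z / 2 ∨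
      (4 - a * b) / 4 ≤ b ^ 2 / (16 * z) * (1 + √(1 + 4 * t * z)) ∨
      (4 - a * b) / 4 ≤ (a - 2) ^ 2 / (16 * t) * (1 + √(1 + 4 * t * z))) :
    1 ≤ cirRate a b z t := by
  have hS : 0 ≤ 1 + √(1 + 4 * t * z) := by positivity
  have hR : 0 ≤ b ^ 2 / (16 * z) * (1 + √(1 + 4 * t * z)) := by positivity
  have hQ : 0 ≤ (a - 2) ^ 2 / (16 * t) * (1 + √(1 + 4 * t * z)) := by positivity
  rw [cirRate, add_mul]
  rcases h with h | h | h <;> linarith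

lemma quarter_le_div_mul_one_add_of_lt_div {c p x s : ℝ} (hc : 0 < c) (hx : 0 < x)
    (hs : 0 ≤ s) (h : x < p / (4 * c)) : c / 4 ≤ p / (16 * x) * (1 + s) := by
  have hp : c / 4 ≤ p / (16 * x) := by
    rw [div_le_div_iff₀ (by norm_num) (by positivity)]
    nlinarith [(lt_div_iff₀ (by positivity : (0 : ℝ) < 4 * c)).mp h]
  calc c / 4 ≤ p / (16 * x) := hp
    _ ≤ p / (16 * x) * (1 + s) := le_mul_of_one_le_right (by linarith) (by linarith)

lemma quarter_le_div_mul_one_add_sqrt_of_lt {b c z t : ℝ} (hb : b ≠ 0) (hc : 0 < c) (hz : 0 < z)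
    (hzc : z ≤ c) (hbc : b ^ 2 ≤ c ^ 2) (ht : 4 * c ^ 5 / b ^ 6 < t) :
    c / 4 ≤ b ^ 2 / (16 * z) * (1 + √(1 + 4 * t * z)) := by
  have hb2 : 0 < b ^ 2 := by positivity
  have htb : 4 * c ^ 5 < t * b ^ 6 := (div_lt_iff₀ (by positivity)).mp ht
  have hzb : z * b ^ 2 ≤ c ^ 3 := by
    calc z * b ^ 2 ≤ c * c ^ 2 := mul_le_mul hzc hbc hb2.le hc.le
      _ = c ^ 3 := by ring
  have hsq : (4 * c * z / b ^ 2) ^ 2 ≤ 1 + 4 * t * z := by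
    rw [div_pow, div_le_iff₀ (by positivity)]
    nlinarith [mul_le_mul_of_nonneg_left hzb (by positivity : (0 : ℝ) ≤ 16 * c ^ 2 * z * b ^ 2),
      mul_lt_mul_of_pos_left htb (by positivity : (0 : ℝ) < 4 * z)]
  have hS : 4 * c * z / b ^ 2 ≤ √(1 + 4 * t * z) := Real.le_sqrt_of_sq_le hsq
  calc c / 4 = b ^ 2 / (16 * z) * (4 * c * z / b ^ 2) := by field_simp; ring
    _ ≤ b ^ 2 / (16 * z) * (1 + √(1 + 4 * t * z)) := by gcongr; linarith

end

/-- Coercivity of the rate function `J`: for `a > 2` and `b < 0`, with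
`J(z,t) = z/2 + (b²/(16z) + (a-2)²/(16t))(1+√(1+4tz)) + ab/4`, setting
`ε = b²/(4(4-ab))`, `A = (4-ab)/2`, `ξ = (a-2)²/(4(4-ab))`, `B = 4(4-ab)⁵/b⁶` and
`K = [ε,A] × [ξ,B]`, every `(z,t)` with `z > 0`, `t > 0` outside `K` satisfies
`J(z,t) ≥ 1`. -/
theorem J_coercive (a b : ℝ) (ha : 2 < a) (hb : b < 0)
    (J : ℝ → ℝ → ℝ)
    (hJ : ∀ z t : ℝ, 0 < z → 0 < t →
      J z t = z/2 + (b^2/(16*z) + (a-2)^2/(16*t)) * (1 + Real.sqrt (1 + 4*t*z))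
        + a*b/4) :
    ∀ z t : ℝ, 0 < z → 0 < t →
      (z, t) ∉ (Set.Icc (b^2/(4*(4-a*b))) ((4-a*b)/2)) ×ˢ
        (Set.Icc ((a-2)^2/(4*(4-a*b))) (4*(4-a*b)^5/b^6)) →
      1 ≤ J z t := by
  intro z t hz ht hK
  have hc : 0 < 4 - a * b := by nlinarith
  have hbc : b ^ 2 ≤ (4 - a * b) ^ 2 := by nlinarith [mul_pos (by linarith : (0 : ℝ) < a - 1) (neg_pos.mpr hb)]
  have hS : 0 ≤ √(1 + 4 * t * z) := Real.sqrt_nonneg _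
  rw [hJ z t hz ht]
  refine one_le_cirRate_of_dominant hz ht ?_
  simp only [Set.mem_prod, Set.mem_Icc, not_and_or, not_le] at hK
  rcases hK with (hzε | hzA) | (htξ | htB)
  · exact Or.inr (Or.inl (quarter_le_div_mul_one_add_of_lt_div hc hz hS hzε))
  · left; linarith
  · exact Or.inr (Or.inr (quarter_le_div_mul_one_add_of_lt_div hc ht hS htξ))
  · rcases le_or_gt ((4 - a * b) / 2) z with hzA | hzA
    · left; linarith
    · exact Or.inr (Or.inl
        (quarter_le_div_mul_one_add_sqrt_of_lt hb.ne hc hz (by linarith) hbc htB))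
end
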